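/- arXiv:2108.06315 — 2 statements merged into one kernel-verified Lean document; each statement's English description precedes it below -/
import Mathlib

section
/- Let f : ℝ → ℝ be a rapidly decreasing (Schwartz) function with f(0) = 1 and f(n) = 0 for all nonzero integers n, and suppose |f(t)| ≤ C/(1+t²) for all t with some C > 0. Let K = sup_{t∈ℝ} Σ_{n∈ℤ} C/(1+(t−n)²) < ∞. Then the map G : ([0,1]²)^ℤ → C_b(ℝ, ℂ) defined by G(a)(t) = (1/(2K)) Σ_{n∈ℤ} (a_{1,n} + i·a_{2,n}) f(t−n) is well-defined (the series converges absolutely and uniformly), injective, and satisfies G(σ a) = σ_1(G(a)) where σ is the shift on ([0,1]²)^ℤ and σ_1 is translation by 1. -/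
open Filter

lemma summable_shift_sq (C t : ℝ) (hC : 0 ≤ C) :
    Summable (fun n : ℤ => C / (1 + (t - n) ^ 2)) := by
  have hg : Summable (fun n : ℤ => 4 * C / (n : ℝ) ^ 2) := by
    have := (Real.summable_one_div_int_pow (p := 2)).2 one_lt_two
    simpa [div_eq_mul_inv, mul_assoc] using this.mul_left (4 * C)
  refine summable_of_isBigO hg ?_
  rw [Asymptotics.isBigO_iff]
  refine ⟨1, ?_⟩
  have hfin : {n : ℤ | ¬ 2 * |t| + 1 ≤ |(n : ℝ)|} ⊆ Set.Icc (-⌈2 * |t| + 1⌉) ⌈2 * |t| + 1⌉ := by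
    intro n hn
    simp only [Set.mem_setOf_eq, not_le] at hn
    have h1 : |(n : ℝ)| ≤ (⌈2 * |t| + 1⌉ : ℝ) := hn.le.trans (Int.le_ceil _)
    rw [abs_le] at h1
    constructor
    · exact_mod_cast (by linarith [h1.1] : (-⌈2 * |t| + 1⌉ : ℝ) ≤ (n : ℝ))
    · exact_mod_cast h1.2
  have hev : ∀ᶠ n : ℤ in cofinite, 2 * |t| + 1 ≤ |(n : ℝ)| :=
    ((Set.finite_Icc _ _).subset hfin).eventually_cofinite_notMem.mono (by
      intro n hn; by_contra h; exact hn h)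
  filter_upwards [hev] with n hn
  have hn0 : (n : ℝ) ≠ 0 := by
    intro h; rw [h, abs_zero] at hn; nlinarith [abs_nonneg t]
  have hpos : (0:ℝ) < 1 + (t - n) ^ 2 := by positivity
  have hn2 : (0:ℝ) < (n : ℝ) ^ 2 := by positivity
  have htn : t * n ≤ |t| * |(n:ℝ)| := by rw [← abs_mul]; exact le_abs_self _
  have key : (n : ℝ) ^ 2 ≤ 4 * (1 + (t - n) ^ 2) := by
    have h2 : 0 ≤ (|(n:ℝ)| - 2 * |t|) * (3 * |(n:ℝ)| - 2 * |t|) := by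
      apply mul_nonneg <;> nlinarith [abs_nonneg t, abs_nonneg (n:ℝ)]
    nlinarith [sq_abs (n:ℝ), sq_abs t, h2, htn]
  have l1 : ‖C / (1 + (t - n) ^ 2)‖ = C / (1 + (t - n) ^ 2) :=
    abs_of_nonneg (div_nonneg hC hpos.le)
  have l2 : ‖4 * C / (n:ℝ) ^ 2‖ = 4 * C / (n:ℝ) ^ 2 :=
    abs_of_nonneg (div_nonneg (by linarith) hn2.le)
  rw [l1, l2, one_mul, div_le_div_iff₀ hpos hn2]
  nlinarith [mul_le_mul_of_nonneg_left key hC]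

/-- `G(a)(t) = (1/(2K)) ∑_{n ∈ ℤ} (a_{1,n} + i a_{2,n}) f(t - n)`. -/
noncomputable def Gmap (K : ℝ) (f : ℝ → ℝ) (a : ℤ → ℝ × ℝ) (t : ℝ) : ℂ :=
  (1 / (2 * K)) * ∑' n : ℤ, ((a n).1 + (a n).2 * Complex.I) * f (t - n)

/-- Let `f : ℝ → ℝ` be a rapidly decreasing function with `f(0) = 1`,
`f(n) = 0` for nonzero integers `n`, and `|f(t)| ≤ C/(1+t²)`, and let
`K = sup_t ∑_{n ∈ ℤ} C/(1+(t-n)²) < ∞`. Then on sequences valued in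
`[0,1]²`, the map `G` is well defined (the series converges absolutely),
injective, and intertwines the shift with translation by `1`. -/
theorem stmt_14 (f : ℝ → ℝ) (hf : ∀ n j : ℕ, Filter.Tendsto
      (fun t : ℝ => t ^ n * iteratedDeriv j f t) (Filter.cocompact ℝ) (nhds 0))
    (hsmooth : ContDiff ℝ (⊤ : ℕ∞) f)
    (hf0 : f 0 = 1) (hfz : ∀ n : ℤ, n ≠ 0 → f (n : ℝ) = 0)
    (C : ℝ) (hC : 0 < C) (hfb : ∀ t : ℝ, |f t| ≤ C / (1 + t ^ 2))
    (K : ℝ) (hKpos : 0 < K)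
    (hK : ∀ t : ℝ, ∑' n : ℤ, C / (1 + (t - n) ^ 2) ≤ K) :
    (∀ (a : ℤ → ℝ × ℝ), (∀ n, (a n).1 ∈ Set.Icc (0:ℝ) 1 ∧
        (a n).2 ∈ Set.Icc (0:ℝ) 1) → ∀ t : ℝ,
      Summable (fun n : ℤ => ‖((a n).1 + (a n).2 * Complex.I) * f (t - n)‖)) ∧
    (∀ a b : ℤ → ℝ × ℝ,
      (∀ n, (a n).1 ∈ Set.Icc (0:ℝ) 1 ∧ (a n).2 ∈ Set.Icc (0:ℝ) 1) →
      (∀ n, (b n).1 ∈ Set.Icc (0:ℝ) 1 ∧ (b n).2 ∈ Set.Icc (0:ℝ) 1) →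
      Gmap K f a = Gmap K f b → a = b) ∧
    (∀ (a : ℤ → ℝ × ℝ), (∀ n, (a n).1 ∈ Set.Icc (0:ℝ) 1 ∧
        (a n).2 ∈ Set.Icc (0:ℝ) 1) → ∀ t : ℝ,
      Gmap K f (fun n => a (n + 1)) t = Gmap K f a (t + 1)) := by
  refine ⟨?_, ?_, ?_⟩
  · -- summability
    intro a ha t
    have hsum : Summable (fun n : ℤ => 2 * C / (1 + (t - n) ^ 2)) :=
      summable_shift_sq (2 * C) t (by linarith)
    refine Summable.of_nonneg_of_le (fun n => norm_nonneg _) (fun n => ?_) hsum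
    have h1 : ‖((a n).1 : ℂ) + (a n).2 * Complex.I‖ ≤ 2 := by
      calc ‖((a n).1 : ℂ) + (a n).2 * Complex.I‖
          ≤ ‖((a n).1 : ℂ)‖ + ‖((a n).2 : ℂ) * Complex.I‖ := norm_add_le _ _
        _ ≤ 2 := by
            rw [norm_mul, Complex.norm_I, mul_one, Complex.norm_real, Complex.norm_real]
            rw [Real.norm_eq_abs, Real.norm_eq_abs,
              abs_of_nonneg (ha n).1.1, abs_of_nonneg (ha n).2.1]
            linarith [(ha n).1.2, (ha n).2.2]
    rw [norm_mul]
    calc ‖((a n).1 : ℂ) + (a n).2 * Complex.I‖ * ‖(f (t - n) : ℂ)‖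
        ≤ 2 * (C / (1 + (t - n) ^ 2)) := by
          apply mul_le_mul h1 ?_ (norm_nonneg _) (by norm_num)
          rw [Complex.norm_real, Real.norm_eq_abs]; exact hfb _
      _ = 2 * C / (1 + (t - n) ^ 2) := by ring
  · -- injectivity
    intro a b ha hb hG
    have key : ∀ (c : ℤ → ℝ × ℝ) (m : ℤ),
        Gmap K f c m = (1 / (2 * K)) * ((c m).1 + (c m).2 * Complex.I) := by
      intro c m
      unfold Gmap
      congr 1
      rw [tsum_eq_single m]
      · have : (m : ℝ) - (m : ℝ) = ((0 : ℤ) : ℝ) := by push_cast; ring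
        rw [this]; norm_num [hf0]
      · intro n hn
        have h1 : (m : ℝ) - (n : ℝ) = ((m - n : ℤ) : ℝ) := by push_cast; ring
        rw [h1, hfz (m - n) (sub_ne_zero.2 (fun h => hn h.symm))]
        simp
    funext m
    have h1 : Gmap K f a m = Gmap K f b m := by rw [hG]
    rw [key a m, key b m] at h1
    have hKne : (2 * K : ℂ) ≠ 0 := by
      simp only [ne_eq, mul_eq_zero, not_or]
      exact ⟨by norm_num, by exact_mod_cast hKpos.ne'⟩
    have h2 : ((a m).1 : ℂ) + (a m).2 * Complex.I = (b m).1 + (b m).2 * Complex.I := by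
      field_simp at h1
      rw [div_left_inj' (by exact_mod_cast hKpos.ne')] at h1; rw [h1]; ring
    have hre := congrArg Complex.re h2
    have him := congrArg Complex.im h2
    simp [Complex.add_re, Complex.add_im] at hre him
    exact Prod.ext hre him
  · -- shift
    intro a ha t
    unfold Gmap
    congr 1
    have := (Equiv.addRight (1 : ℤ)).tsum_eq
      (fun n : ℤ => (((a n).1 : ℂ) + (a n).2 * Complex.I) * f (t + 1 - n))
    rw [← this]
    refine tsum_congr fun n => ?_
    simp only [Equiv.coe_addRight]
    congr 2
    push_cast
    ring
end

section
/- With G : ([0,1]²)^ℤ → C_b(ℝ, ℂ) defined as G(a)(t) = (1/(2K)) Σ_{n∈ℤ} (a_{1,n} + i a_{2,n}) f(t−n), where |f(t)| ≤ C/(1+t²) and K = sup_t Σ_n C/(1+(t−n)²), the map G is continuous from the product topology on ([0,1]²)^ℤ to the topology of uniform convergence on compact subsets of ℝ. -/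
/-!
The map `(a, t) ↦ G(a)(t)` is jointly continuous on `([0,1]²)^ℤ × ℝ`, and currying a jointly
continuous map gives a continuous map into `C(ℝ, ℂ)` with the compact-open topology. For joint
continuity, by Peetre's inequality the `n`-th term is bounded by `4C(1 + N²)/(1 + n²)` whenever
`|t| ≤ N`, a summable bound independent of `a`, so the Weierstrass M-test applies locally in `t`.
-/

open Set Filter Topology

lemma summable_one_div_one_add_sq_int : Summable fun n : ℤ => 1 / (1 + (n : ℝ) ^ 2) := by
  refine (Real.summable_one_div_int_pow.mpr one_lt_two).of_norm_bounded_eventually ?_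
  filter_upwards [eventually_cofinite_ne 0] with n hn
  have hn2 : (0 : ℝ) < (n : ℝ) ^ 2 := by positivity
  rw [Real.norm_of_nonneg (by positivity)]
  gcongr
  linarith

/-- Peetre's inequality for the weight `1 + x ^ 2`. -/
lemma one_add_sq_le_two_mul_one_add_sq_mul_one_add_sq_sub (x y : ℝ) :
    1 + x ^ 2 ≤ 2 * (1 + y ^ 2) * (1 + (y - x) ^ 2) := by
  nlinarith [sq_nonneg (x - 2 * y), mul_nonneg (sq_nonneg y) (sq_nonneg (y - x))]

lemma div_one_add_sub_sq_le_of_abs_le {C N t : ℝ} (hC : 0 ≤ C) (ht : |t| ≤ N) (x : ℝ) :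
    C / (1 + (t - x) ^ 2) ≤ 2 * C * (1 + N ^ 2) * (1 / (1 + x ^ 2)) := by
  have htN : t ^ 2 ≤ N ^ 2 := sq_le_sq' (abs_le.1 ht).1 (abs_le.1 ht).2
  rw [mul_one_div, div_le_div_iff₀ (by positivity) (by positivity)]
  calc C * (1 + x ^ 2) ≤ C * (2 * (1 + t ^ 2) * (1 + (t - x) ^ 2)) :=
        mul_le_mul_of_nonneg_left (one_add_sq_le_two_mul_one_add_sq_mul_one_add_sq_sub x t) hC
    _ ≤ C * (2 * (1 + N ^ 2) * (1 + (t - x) ^ 2)) := by gcongr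
    _ = 2 * C * (1 + N ^ 2) * (1 + (t - x) ^ 2) := by ring

theorem continuous_tsum_of_norm_le_div_one_add_sq {X E : Type*} [TopologicalSpace X]
    [NormedAddCommGroup E] [CompleteSpace E] {F : ℤ → X → E} {τ : X → ℝ} {C : ℝ}
    (hF : ∀ n, Continuous (F n)) (hτ : Continuous τ) (hC : 0 ≤ C)
    (hFτ : ∀ n x, ‖F n x‖ ≤ C / (1 + (τ x - n) ^ 2)) :
    Continuous fun x => ∑' n, F n x := by
  refine continuous_iff_continuousAt.2 fun x => ?_
  set N := |τ x| + 1
  have hU : τ ⁻¹' Ioo (-N) N ∈ 𝓝 x := hτ.continuousAt.preimage_mem_nhds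
    (Ioo_mem_nhds (by linarith [neg_abs_le (τ x)]) (by linarith [le_abs_self (τ x)]))
  refine (continuousOn_tsum (fun n => (hF n).continuousOn)
    (summable_one_div_one_add_sq_int.mul_left (2 * C * (1 + N ^ 2)))
    fun n y hy => ?_).continuousAt hU
  exact (hFτ n y).trans (div_one_add_sub_sq_le_of_abs_le hC (abs_le.2 ⟨hy.1.le, hy.2.le⟩) n)

lemma norm_ofReal_add_ofReal_mul_I_le_two {x y : ℝ} (hx : x ∈ Icc (0 : ℝ) 1)
    (hy : y ∈ Icc (0 : ℝ) 1) : ‖(x : ℂ) + y * Complex.I‖ ≤ 2 := by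
  have h := Complex.norm_le_abs_re_add_abs_im ((x : ℂ) + y * Complex.I)
  simp only [Complex.add_re, Complex.ofReal_re, Complex.mul_re, Complex.I_re, mul_zero,
    Complex.ofReal_im, Complex.I_im, mul_one, sub_zero, add_zero, Complex.add_im,
    Complex.mul_im, zero_add, abs_of_nonneg hx.1, abs_of_nonneg hy.1] at h
  linarith [hx.2, hy.2]

theorem stmt_15_general (f : ℝ → ℝ) (hfc : Continuous f)
    (C : ℝ) (hC : 0 < C) (hfb : ∀ t : ℝ, |f t| ≤ C / (1 + t ^ 2))
    (K : ℝ) :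
    ∃ G : {a : ℤ → ℝ × ℝ // ∀ n, (a n).1 ∈ Set.Icc (0:ℝ) 1 ∧
        (a n).2 ∈ Set.Icc (0:ℝ) 1} → C(ℝ, ℂ),
      (∀ a t, G a t =
        (1 / (2 * K)) * ∑' n : ℤ,
          (((a.1 n).1 : ℂ) + ((a.1 n).2 : ℂ) * Complex.I) * (f (t - n) : ℝ)) ∧
      Continuous G := by
  set X := {a : ℤ → ℝ × ℝ // ∀ n, (a n).1 ∈ Set.Icc (0:ℝ) 1 ∧ (a n).2 ∈ Set.Icc (0:ℝ) 1}
  let F : ℤ → X × ℝ → ℂ := fun n p =>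
    (((p.1.1 n).1 : ℂ) + ((p.1.1 n).2 : ℂ) * Complex.I) * (f (p.2 - n) : ℝ)
  have hF : ∀ n, Continuous (F n) := fun n => by
    have hcoord : Continuous fun p : X × ℝ => p.1.1 n :=
      (continuous_apply n).comp (continuous_subtype_val.comp continuous_fst)
    fun_prop
  have hFbound : ∀ n p, ‖F n p‖ ≤ 2 * C / (1 + (p.2 - n) ^ 2) := fun n p => by
    rw [norm_mul, Complex.norm_real, Real.norm_eq_abs, mul_div_assoc]
    exact mul_le_mul (norm_ofReal_add_ofReal_mul_I_le_two (p.1.2 n).1 (p.1.2 n).2) (hfb _)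
      (abs_nonneg _) zero_le_two
  have hH : Continuous fun p : X × ℝ => (1 / (2 * K) : ℂ) * ∑' n, F n p :=
    continuous_const.mul
      (continuous_tsum_of_norm_le_div_one_add_sq hF continuous_snd (by positivity) hFbound)
  exact ⟨ContinuousMap.curry ⟨_, hH⟩, fun a t => rfl, (ContinuousMap.curry ⟨_, hH⟩).continuous⟩

/-- With `G(a)(t) = (1/(2K)) ∑_{n ∈ ℤ} (a_{1,n} + i a_{2,n}) f(t - n)`, where
`|f(t)| ≤ C/(1+t²)` and `K ≥ sup_t ∑_n C/(1+(t-n)²) > 0`, the map `G` is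
continuous from `([0,1]²)^ℤ` with the product topology to `C(ℝ, ℂ)` with the
topology of uniform convergence on compact sets. -/
theorem stmt_15 (f : ℝ → ℝ) (hfc : Continuous f)
    (C : ℝ) (hC : 0 < C) (hfb : ∀ t : ℝ, |f t| ≤ C / (1 + t ^ 2))
    (K : ℝ) (hKpos : 0 < K)
    (hK : ∀ t : ℝ, ∑' n : ℤ, C / (1 + (t - n) ^ 2) ≤ K) :
    ∃ G : {a : ℤ → ℝ × ℝ // ∀ n, (a n).1 ∈ Set.Icc (0:ℝ) 1 ∧
        (a n).2 ∈ Set.Icc (0:ℝ) 1} → C(ℝ, ℂ),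
      (∀ a t, G a t =
        (1 / (2 * K)) * ∑' n : ℤ,
          (((a.1 n).1 : ℂ) + ((a.1 n).2 : ℂ) * Complex.I) * (f (t - n) : ℝ)) ∧
      Continuous G :=
  stmt_15_general f hfc C hC hfb K
end
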